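/- Let p* = inf{ f(φ) + g(ψ) : φ_π = ψ_{π,π'} for every ordered pair (π,π') with {π,π'} ∈ E }. Suppose the sequences (φ^l) ⊆ Φ and copy variables (ψ^l) satisfy: (a) residual convergence, i.e. φ^l_π − ψ^l_{π,π'} → 0 as l → ∞ for every ordered pair (π,π') with {π,π'} ∈ E; and (b) objective convergence, i.e. f(φ^l) + g(ψ^l) → p*. Then p* = min_{φ∈Φ} L_λ(φ) and L_λ(φ^l) → min_{φ∈Φ} L_λ(φ) as l → ∞. -/

import Mathlib

open Finset Filter

noncomputable section

open Classical

namespace Paper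

/-- The adjacent transposition `sᵢ` exchanging `i` and `i+1` (`0`-indexed). -/
def adjT (r : ℕ) (i : Fin (r - 1)) : Equiv.Perm (Fin r) :=
  Equiv.swap ⟨i.1, by have := i.isLt; omega⟩ ⟨i.1 + 1, by have := i.isLt; omega⟩

/-- Kendall adjacency on `S_r` : `{π, π'} ∈ E`. -/
def KAdj (r : ℕ) (π π' : Equiv.Perm (Fin r)) : Prop :=
  ∃ i : Fin (r - 1), π' = adjT r i * π

theorem KAdj.symm {r : ℕ} {π π' : Equiv.Perm (Fin r)} (h : KAdj r π π') : KAdj r π' π := by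
  obtain ⟨i, rfl⟩ := h
  refine ⟨i, ?_⟩
  rw [← mul_assoc]
  simp [adjT, Equiv.swap_mul_self]

/-- Ordered edges of the Kendall graph. -/
def Edge (r : ℕ) : Type :=
  {p : Equiv.Perm (Fin r) × Equiv.Perm (Fin r) // KAdj r p.1 p.2}

instance (r : ℕ) : Fintype (Edge r) := by unfold Edge; infer_instance

/-- The reversed (oppositely oriented) edge. -/
def Edge.rev {r : ℕ} (e : Edge r) : Edge r := ⟨(e.1.2, e.1.1), e.2.symm⟩

/-- The simplex constraint set `Φ`. -/
def PhiSet (r : ℕ) : Set (Equiv.Perm (Fin r) → Fin (r - 1) → ℝ) :=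
  {φ | (∀ π t, 0 ≤ φ π t) ∧ ∀ π, (∑ t, φ π t) = 1}

/-- The component function `f_{π,t}` with weight `q = q_{π,t}`. -/
def fpt (q x : ℝ) : EReal :=
  if x < 0 ∨ 1 < x ∨ (x = 0 ∧ q ≠ 0) then ⊤
  else if q = 0 then 0
  else ((-(q * Real.log x) : ℝ) : EReal)

/-- The extended-real-valued function `f`. -/
def fObj (r : ℕ) (q φ : Equiv.Perm (Fin r) → Fin (r - 1) → ℝ) : EReal :=
  if ∃ π, (∑ t, φ π t) ≠ 1 then ⊤
  else ∑ π : Equiv.Perm (Fin r), ∑ t : Fin (r - 1), fpt (q π t) (φ π t)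

/-- `g(ψ) = λ Σ_{unordered edges} ‖ψ_{π,π'} - ψ_{π',π}‖₂²`
(summing over ordered edges counts every unordered edge twice). -/
def gObj (r : ℕ) (lam : ℝ) (ψ : Edge r → Fin (r - 1) → ℝ) : ℝ :=
  lam / 2 * ∑ e : Edge r, ∑ t, (ψ e t - ψ e.rev t) ^ 2

/-- `Σ_{unordered edges} (⟨y_{π,π'}, φ_π - ψ_{π,π'}⟩ + ⟨y_{π',π}, φ_{π'} - ψ_{π',π}⟩)`,
written as a sum over ordered edges. -/
def linTerm (r : ℕ) (φ : Equiv.Perm (Fin r) → Fin (r - 1) → ℝ)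
    (ψ y : Edge r → Fin (r - 1) → ℝ) : ℝ :=
  ∑ e : Edge r, ∑ t, y e t * (φ e.1.1 t - ψ e t)

/-- The unaugmented Lagrangian `L̃₀`. -/
def Ltilde (r : ℕ) (q : Equiv.Perm (Fin r) → Fin (r - 1) → ℝ) (lam : ℝ)
    (φ : Equiv.Perm (Fin r) → Fin (r - 1) → ℝ) (ψ y : Edge r → Fin (r - 1) → ℝ) : EReal :=
  fObj r q φ + ((gObj r lam ψ + linTerm r φ ψ y : ℝ) : EReal)

/-- `L⁺(φ,ψ) = sup_y L̃₀(φ,ψ,y)`. -/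
def Lplus (r : ℕ) (q : Equiv.Perm (Fin r) → Fin (r - 1) → ℝ) (lam : ℝ)
    (φ : Equiv.Perm (Fin r) → Fin (r - 1) → ℝ) (ψ : Edge r → Fin (r - 1) → ℝ) : EReal :=
  ⨆ y : Edge r → Fin (r - 1) → ℝ, Ltilde r q lam φ ψ y

/-- `L⁻(y) = sup_{φ,ψ} (-L̃₀(φ,ψ,y))`. -/
def Lminus (r : ℕ) (q : Equiv.Perm (Fin r) → Fin (r - 1) → ℝ) (lam : ℝ)
    (y : Edge r → Fin (r - 1) → ℝ) : EReal :=
  ⨆ φ : Equiv.Perm (Fin r) → Fin (r - 1) → ℝ, ⨆ ψ : Edge r → Fin (r - 1) → ℝ,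
    -Ltilde r q lam φ ψ y

/-- `Σ_{unordered edges} ‖φ_π - φ_{π'}‖₂²`. -/
def edgePen (r : ℕ) (φ : Equiv.Perm (Fin r) → Fin (r - 1) → ℝ) : ℝ :=
  (1 / 2) * ∑ e : Edge r, ∑ t, (φ e.1.1 t - φ e.1.2 t) ^ 2

/-- The regularized objective `L_λ` (with the conventions `0·log 0 = 0`,
and `+∞` if `q_{π,t} > 0` and `φ_{π,t} = 0`). -/
def Lreg (r : ℕ) (q : Equiv.Perm (Fin r) → Fin (r - 1) → ℝ) (lam : ℝ)
    (φ : Equiv.Perm (Fin r) → Fin (r - 1) → ℝ) : EReal :=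
  if ∃ π t, 0 < q π t ∧ φ π t = 0 then ⊤
  else (((-∑ π : Equiv.Perm (Fin r), ∑ t, q π t * Real.log (φ π t)) + lam * edgePen r φ : ℝ) : EReal)

/-- `p* = inf { f(φ) + g(ψ) : φ_π = ψ_{π,π'} for every oriented edge }`. -/
def pstar (r : ℕ) (q : Equiv.Perm (Fin r) → Fin (r - 1) → ℝ) (lam : ℝ) : EReal :=
  ⨅ p : {p : (Equiv.Perm (Fin r) → Fin (r - 1) → ℝ) × (Edge r → Fin (r - 1) → ℝ) //
      ∀ e : Edge r, p.1 e.1.1 = p.2 e},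
    (fObj r q p.1.1 + ((gObj r lam p.1.2 : ℝ) : EReal))

/-- The augmented Lagrangian `L_ρ` in scaled dual form. -/
def Lrho (r : ℕ) (q : Equiv.Perm (Fin r) → Fin (r - 1) → ℝ) (lam rho : ℝ)
    (φ : Equiv.Perm (Fin r) → Fin (r - 1) → ℝ) (ψ u : Edge r → Fin (r - 1) → ℝ) : EReal :=
  fObj r q φ +
    ((gObj r lam ψ + rho / 2 *
        ∑ e : Edge r, ((∑ t, (φ e.1.1 t - ψ e t + u e t) ^ 2) - ∑ t, (u e t) ^ 2) : ℝ) : EReal)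

/-- A top-`t` ranking (`t ∈ {1,…,r-1}` encoded as `τ.1 + 1` with `τ.1 : Fin (r-1)`),
given by the injective map `τ⁻¹ : {1,…,t} → {1,…,r}`. -/
def TopRank (r : ℕ) : Type :=
  Σ t : Fin (r - 1), (Fin ((t : ℕ) + 1) ↪ Fin r)

instance (r : ℕ) : Fintype (TopRank r) := by unfold TopRank; infer_instance

/-- `[τ]` : the complete rankings compatible with the top ranking `τ`. -/
def compat (r : ℕ) (τ : TopRank r) : Finset (Equiv.Perm (Fin r)) :=
  Finset.univ.filter fun π =>
    ∀ i : Fin ((τ.1 : ℕ) + 1),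
      π.symm (Fin.castLE (show (τ.1 : ℕ) + 1 ≤ r by have := τ.1.isLt; omega) i) = τ.2 i

/-- `-q·log p` in the extended reals, with `0 · log 0 = 0` and `-q·log 0 = +∞` for `q ≠ 0`. -/
def nlogTerm (q p : ℝ) : EReal :=
  if q = 0 then 0
  else if p = 0 then ⊤
  else ((-(q * Real.log p) : ℝ) : EReal)

/-- `-log x` in the extended reals (`+∞` unless `x > 0`). -/
def nlog (x : ℝ) : EReal :=
  if 0 < x then ((-Real.log x : ℝ) : EReal) else ⊤

/-- The regularized negative log-likelihood `L_λ(θ,φ)`. -/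
def Lfull (r : ℕ) (Θ : Type*) (P : Equiv.Perm (Fin r) → Θ → ℝ) (lam : ℝ)
    (n : ℕ) (τs : Fin n → TopRank r) (θ : Θ)
    (φ : Equiv.Perm (Fin r) → Fin (r - 1) → ℝ) : EReal :=
  (∑ i, nlog (∑ π ∈ compat r (τs i), φ π (τs i).1 * P π θ)) +
    ((lam * edgePen r φ : ℝ) : EReal)

/-!
On `Φ` the regularized objective is `L_λ(φ) = f(φ) + g(ψ_φ)` for the consistent copy
`ψ_φ(π, π') = φ_π`, so `p* ≤ L_λ` on `Φ`. Along the given sequences, `L_λ(φ^l)` differs from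
`f(φ^l) + g(ψ^l)` by `g(ψ_{φ^l}) - g(ψ^l)`, a difference of quadratics whose arguments are
bounded and differ by the vanishing residuals; hence `L_λ(φ^l) → p*`. Finally `Φ` is compact and
`L_λ` is continuous on `Φ` as an extended-real function (`-q log x → +∞` as `x → 0⁺`), so a
cluster point `φ*` of `(φ^l)` has `L_λ(φ*) = p*`, and the infimum is attained.
-/

open Topology

theorem _root_.EReal.coe_finset_sum {ι : Type*} (s : Finset ι) (f : ι → ℝ) :
    ((∑ i ∈ s, f i : ℝ) : EReal) = ∑ i ∈ s, (f i : EReal) :=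
  map_sum (⟨⟨Real.toEReal, EReal.coe_zero⟩, EReal.coe_add⟩ : ℝ →+ EReal) f s

theorem _root_.EReal.finset_sum_eq_top {ι : Type*} {s : Finset ι} {f : ι → EReal}
    (h0 : ∀ i ∈ s, 0 ≤ f i) {i : ι} (hi : i ∈ s) (htop : f i = ⊤) : ∑ j ∈ s, f j = ⊤ :=
  top_le_iff.1 (htop ▸ Finset.single_le_sum h0 hi)

theorem _root_.Filter.Tendsto.ereal_add_coe {α : Type*} {l : Filter α} {f : α → EReal}
    {g : α → ℝ} {a : EReal} {b : ℝ} (hf : Tendsto f l (𝓝 a)) (hg : Tendsto g l (𝓝 b)) :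
    Tendsto (fun x => f x + g x) l (𝓝 (a + b)) :=
  (EReal.continuousAt_add (Or.inr (EReal.coe_ne_bot b)) (Or.inr (EReal.coe_ne_top b))).tendsto.comp
    (hf.prodMk_nhds (EReal.tendsto_coe.2 hg))

theorem _root_.ContinuousWithinAt.ereal_finset_sum {ι X : Type*} [TopologicalSpace X]
    {s : Finset ι} {f : ι → X → EReal} {S : Set X} {x : X}
    (hf : ∀ i ∈ s, ContinuousWithinAt (f i) S x) (hbot : ∀ i ∈ s, f i x ≠ ⊥) :
    ContinuousWithinAt (fun y => ∑ i ∈ s, f i y) S x := by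
  induction s using Finset.induction_on with
  | empty => simpa using continuousWithinAt_const
  | insert a s ha ih =>
    simp only [Finset.sum_insert ha]
    have hs : ∑ i ∈ s, f i x ≠ ⊥ := Finset.sum_induction _ (· ≠ ⊥)
      (fun _ _ h h' => EReal.add_ne_bot_iff.2 ⟨h, h'⟩) EReal.zero_ne_bot
      fun i hi => hbot i (mem_insert_of_mem hi)
    exact (EReal.continuousAt_add (Or.inr hs) (Or.inl (hbot a (mem_insert_self a s))))
      |>.comp_continuousWithinAt ((hf a (mem_insert_self a s)).prodMk
        (ih (fun i hi => hf i (mem_insert_of_mem hi)) fun i hi => hbot i (mem_insert_of_mem hi)))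

theorem tendsto_sq_sub_sq_of_tendsto_sub {α : Type*} {l : Filter α} {u v : α → ℝ}
    (hu : IsBoundedUnder (· ≤ ·) l fun x => ‖u x‖) (huv : Tendsto (fun x => u x - v x) l (𝓝 0)) :
    Tendsto (fun x => u x ^ 2 - v x ^ 2) l (𝓝 0) := by
  have h := ((isBoundedUnder_le_mul_tendsto_zero hu huv).const_mul 2).sub (huv.pow 2)
  rw [mul_zero, zero_pow two_ne_zero, sub_zero] at h
  exact h.congr fun x => by ring

section Model

variable {r : ℕ}

theorem le_one_of_mem_PhiSet {φ : Equiv.Perm (Fin r) → Fin (r - 1) → ℝ} (hφ : φ ∈ PhiSet r)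
    (π : Equiv.Perm (Fin r)) (t : Fin (r - 1)) : φ π t ≤ 1 :=
  (single_le_sum (fun s _ => hφ.1 π s) (mem_univ t)).trans_eq (hφ.2 π)

theorem isCompact_PhiSet : IsCompact (PhiSet r) := by
  have hcl : IsClosed (PhiSet r) := by
    change IsClosed ({φ : Equiv.Perm (Fin r) → Fin (r - 1) → ℝ | ∀ π t, 0 ≤ φ π t} ∩
      {φ | ∀ π, ∑ t, φ π t = 1})
    refine IsClosed.inter ?_ ?_ <;> simp only [Set.ofPred_forall]
    · exact isClosed_iInter fun π => isClosed_iInter fun t =>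
        isClosed_le continuous_const (by fun_prop)
    · exact isClosed_iInter fun π => isClosed_eq (by fun_prop) continuous_const
  exact (isCompact_univ_pi fun _ => isCompact_univ_pi fun _ => isCompact_Icc).of_isClosed_subset
    hcl fun φ hφ => Set.mem_univ_pi.2 fun π => Set.mem_univ_pi.2 fun t =>
      ⟨hφ.1 π t, le_one_of_mem_PhiSet hφ π t⟩

theorem fpt_nonneg {q x : ℝ} (hq : 0 ≤ q) : 0 ≤ fpt q x := by
  unfold fpt
  split_ifs with h
  · exact le_top
  · exact le_rfl
  · push Not at h
    exact EReal.coe_nonneg.2 (neg_nonneg.2 (mul_nonpos_of_nonneg_of_nonpos hq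
      (Real.log_nonpos h.1 h.2.1)))

theorem fpt_of_pos {q x : ℝ} (hx0 : 0 < x) (hx1 : x ≤ 1) :
    fpt q x = ((-(q * Real.log x) : ℝ) : EReal) := by
  unfold fpt
  rw [if_neg (by push Not; exact ⟨hx0.le, hx1, fun h => absurd h hx0.ne'⟩)]
  split_ifs with hq
  · simp [hq]
  · rfl

theorem fpt_zero_right {q : ℝ} (hq : q ≠ 0) : fpt q 0 = ⊤ := by
  simp [fpt, hq]

theorem fpt_zero_left {x : ℝ} (hx : x ∈ Set.Icc (0 : ℝ) 1) : fpt 0 x = 0 := by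
  simp [fpt, not_lt.2 hx.1, not_lt.2 hx.2]

theorem tendsto_fpt_zero {q : ℝ} (hq : 0 < q) :
    Tendsto (fpt q) (𝓝[Set.Icc 0 1] 0) (𝓝 ⊤) := by
  rw [EReal.tendsto_nhds_top_iff_real]
  intro a
  filter_upwards [self_mem_nhdsWithin,
    nhdsWithin_le_nhds (gt_mem_nhds (Real.exp_pos (-a / q)))] with y hy hya
  rcases hy.1.eq_or_lt with rfl | hy0
  · rw [fpt_zero_right hq.ne']
    exact EReal.coe_lt_top a
  · rw [fpt_of_pos hy0 hy.2, EReal.coe_lt_coe_iff]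
    have h := Real.log_lt_log hy0 hya
    rw [Real.log_exp, lt_div_iff₀ hq] at h
    linarith

theorem continuousWithinAt_fpt {q x : ℝ} (hq : 0 ≤ q) (hx : x ∈ Set.Icc (0 : ℝ) 1) :
    ContinuousWithinAt (fpt q) (Set.Icc 0 1) x := by
  rcases hq.eq_or_lt with rfl | hq
  · exact continuousWithinAt_const.congr (fun y hy => fpt_zero_left hy) (fpt_zero_left hx)
  rcases hx.1.eq_or_lt with rfl | hx0
  · rw [ContinuousWithinAt, fpt_zero_right hq.ne']
    exact tendsto_fpt_zero hq
  have hlog : ContinuousAt (fun y => ((-(q * Real.log y) : ℝ) : EReal)) x :=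
    continuous_coe_real_ereal.continuousAt.comp ((Real.continuousAt_log hx0.ne').const_mul q).neg
  refine hlog.continuousWithinAt.congr_of_eventuallyEq ?_ (fpt_of_pos hx0 hx.2)
  filter_upwards [self_mem_nhdsWithin, nhdsWithin_le_nhds (lt_mem_nhds hx0)] with y hy hy0
    using fpt_of_pos hy0 hy.2

theorem fObj_of_mem_PhiSet (q : Equiv.Perm (Fin r) → Fin (r - 1) → ℝ)
    {φ : Equiv.Perm (Fin r) → Fin (r - 1) → ℝ} (hφ : φ ∈ PhiSet r) :
    fObj r q φ = ∑ π, ∑ t, fpt (q π t) (φ π t) := by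
  rw [fObj, if_neg (by push Not; exact hφ.2)]

theorem continuousWithinAt_fObj {q : Equiv.Perm (Fin r) → Fin (r - 1) → ℝ}
    (hq : ∀ π t, 0 ≤ q π t) {φ : Equiv.Perm (Fin r) → Fin (r - 1) → ℝ} (hφ : φ ∈ PhiSet r) :
    ContinuousWithinAt (fObj r q) (PhiSet r) φ := by
  have hbot : ∀ π t, fpt (q π t) (φ π t) ≠ ⊥ := fun π t =>
    ne_bot_of_le_ne_bot EReal.zero_ne_bot (fpt_nonneg (hq π t))
  have hsum : ContinuousWithinAt (fun ψ => ∑ π, ∑ t, fpt (q π t) (ψ π t)) (PhiSet r) φ := by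
    refine ContinuousWithinAt.ereal_finset_sum (fun π _ => ?_) fun π _ =>
      ne_bot_of_le_ne_bot EReal.zero_ne_bot (sum_nonneg fun t _ => fpt_nonneg (hq π t))
    refine ContinuousWithinAt.ereal_finset_sum (fun t _ => ?_) fun t _ => hbot π t
    exact ContinuousWithinAt.comp (f := fun ψ : Equiv.Perm (Fin r) → Fin (r - 1) → ℝ => ψ π t)
      (continuousWithinAt_fpt (hq π t) ⟨hφ.1 π t, le_one_of_mem_PhiSet hφ π t⟩)
      ((continuous_apply t).comp (continuous_apply π)).continuousWithinAt
      fun ψ hψ => ⟨hψ.1 π t, le_one_of_mem_PhiSet hψ π t⟩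
  exact hsum.congr (fun ψ hψ => fObj_of_mem_PhiSet q hψ) (fObj_of_mem_PhiSet q hφ)

theorem Lreg_eq_fObj_add {q : Equiv.Perm (Fin r) → Fin (r - 1) → ℝ} (hq : ∀ π t, 0 ≤ q π t)
    (lam : ℝ) {φ : Equiv.Perm (Fin r) → Fin (r - 1) → ℝ} (hφ : φ ∈ PhiSet r) :
    Lreg r q lam φ = fObj r q φ + ((lam * edgePen r φ : ℝ) : EReal) := by
  rw [fObj_of_mem_PhiSet q hφ, Lreg]
  split_ifs with hbad
  · obtain ⟨π, t, hq0, h0⟩ := hbad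
    have htop : fpt (q π t) (φ π t) = ⊤ := by rw [h0, fpt_zero_right hq0.ne']
    rw [EReal.finset_sum_eq_top (fun π _ => sum_nonneg fun t _ => fpt_nonneg (hq π t)) (mem_univ π)
      (EReal.finset_sum_eq_top (fun t _ => fpt_nonneg (hq π t)) (mem_univ t) htop),
      EReal.top_add_coe]
  · push Not at hbad
    have hterm : ∀ π t, fpt (q π t) (φ π t) = ((-(q π t * Real.log (φ π t)) : ℝ) : EReal) := by
      intro π t
      rcases (hφ.1 π t).eq_or_lt with h0 | h0
      · have hq0 : q π t = 0 := le_antisymm (not_lt.1 fun h => hbad π t h h0.symm) (hq π t)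
        rw [← h0, hq0, fpt_zero_left ⟨le_rfl, zero_le_one⟩, zero_mul, neg_zero, EReal.coe_zero]
      · exact fpt_of_pos h0 (le_one_of_mem_PhiSet hφ π t)
    simp only [hterm, ← EReal.coe_finset_sum, ← EReal.coe_add, sum_neg_distrib]

theorem gObj_eq_edgePen (lam : ℝ) (φ : Equiv.Perm (Fin r) → Fin (r - 1) → ℝ) :
    gObj r lam (fun e => φ e.1.1) = lam * edgePen r φ := by
  simp only [gObj, edgePen, Edge.rev]
  ring

theorem pstar_le_Lreg {q : Equiv.Perm (Fin r) → Fin (r - 1) → ℝ} (hq : ∀ π t, 0 ≤ q π t)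
    (lam : ℝ) {φ : Equiv.Perm (Fin r) → Fin (r - 1) → ℝ} (hφ : φ ∈ PhiSet r) :
    pstar r q lam ≤ Lreg r q lam φ := by
  rw [Lreg_eq_fObj_add hq lam hφ, ← gObj_eq_edgePen]
  exact iInf_le_of_le ⟨⟨φ, fun e => φ e.1.1⟩, fun _ => rfl⟩ le_rfl

theorem continuousWithinAt_Lreg {q : Equiv.Perm (Fin r) → Fin (r - 1) → ℝ}
    (hq : ∀ π t, 0 ≤ q π t) (lam : ℝ) {φ : Equiv.Perm (Fin r) → Fin (r - 1) → ℝ}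
    (hφ : φ ∈ PhiSet r) : ContinuousWithinAt (Lreg r q lam) (PhiSet r) φ := by
  have hpen : Continuous fun ψ => lam * edgePen r ψ := by
    unfold edgePen
    fun_prop
  exact ContinuousWithinAt.congr
    ((continuousWithinAt_fObj hq hφ).ereal_add_coe hpen.continuousWithinAt)
    (fun ψ hψ => Lreg_eq_fObj_add hq lam hψ) (Lreg_eq_fObj_add hq lam hφ)

theorem tendsto_edgePen_sub_gObj {α : Type*} {l : Filter α} (lam : ℝ)
    {φs : α → Equiv.Perm (Fin r) → Fin (r - 1) → ℝ} {ψs : α → Edge r → Fin (r - 1) → ℝ}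
    (hΦ : ∀ x, φs x ∈ PhiSet r)
    (hres : ∀ e : Edge r, Tendsto (fun x => φs x e.1.1 - ψs x e) l (𝓝 0)) :
    Tendsto (fun x => lam * edgePen r (φs x) - gObj r lam (ψs x)) l (𝓝 0) := by
  have hterm : ∀ (e : Edge r) t, Tendsto (fun x => (φs x e.1.1 t - φs x e.1.2 t) ^ 2
      - (ψs x e t - ψs x e.rev t) ^ 2) l (𝓝 0) := by
    intro e t
    refine tendsto_sq_sub_sq_of_tendsto_sub (isBoundedUnder_of ⟨1, fun x => ?_⟩) ?_
    · rw [Real.norm_eq_abs, abs_le]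
      constructor <;> linarith [(hΦ x).1 e.1.1 t, (hΦ x).1 e.1.2 t,
        le_one_of_mem_PhiSet (hΦ x) e.1.1 t, le_one_of_mem_PhiSet (hΦ x) e.1.2 t]
    · have h := (tendsto_pi_nhds.1 (hres e) t).sub (tendsto_pi_nhds.1 (hres e.rev) t)
      simp only [Pi.zero_apply, sub_zero] at h
      exact h.congr fun x => by simp only [Pi.sub_apply, Edge.rev]; ring
  have h := (tendsto_finsetSum univ fun e _ => tendsto_finsetSum univ fun t _ =>
    hterm e t).const_mul (lam / 2)
  simp only [sum_const_zero, mul_zero] at h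
  refine h.congr fun x => ?_
  simp only [← gObj_eq_edgePen, gObj, Edge.rev, sum_sub_distrib]
  ring

end Model

theorem stmt12_general (r : ℕ) (lam : ℝ)
    (q : Equiv.Perm (Fin r) → Fin (r - 1) → ℝ) (hq : ∀ π t, 0 ≤ q π t)
    (φs : ℕ → Equiv.Perm (Fin r) → Fin (r - 1) → ℝ)
    (ψs : ℕ → Edge r → Fin (r - 1) → ℝ)
    (hΦ : ∀ l, φs l ∈ PhiSet r)
    (hres : ∀ e : Edge r,
      Tendsto (fun l => φs l e.1.1 - ψs l e) atTop (nhds 0))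
    (hobj : Tendsto (fun l => fObj r q (φs l) + ((gObj r lam (ψs l) : ℝ) : EReal))
      atTop (nhds (pstar r q lam))) :
    IsLeast {x : EReal | ∃ φ ∈ PhiSet r, Lreg r q lam φ = x} (pstar r q lam) ∧
      Tendsto (fun l => Lreg r q lam (φs l)) atTop (nhds (pstar r q lam)) := by
  have hL : Tendsto (fun l => Lreg r q lam (φs l)) atTop (𝓝 (pstar r q lam)) := by
    have h := hobj.ereal_add_coe (tendsto_edgePen_sub_gObj lam hΦ hres)
    rw [EReal.coe_zero, add_zero] at h
    refine h.congr fun l => ?_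
    rw [Lreg_eq_fObj_add hq lam (hΦ l), add_assoc, ← EReal.coe_add, add_sub_cancel]
  obtain ⟨φ₀, hφ₀, ns, hns, hlim⟩ := isCompact_PhiSet.tendsto_subseq hΦ
  have hmin : Lreg r q lam φ₀ = pstar r q lam :=
    tendsto_nhds_unique ((continuousWithinAt_Lreg hq lam hφ₀).tendsto.comp
      (tendsto_nhdsWithin_iff.2 ⟨hlim, Eventually.of_forall fun k => hΦ (ns k)⟩))
      (hL.comp hns.tendsto_atTop)
  exact ⟨⟨⟨φ₀, hφ₀, hmin⟩, fun _ ⟨φ, hφ, hx⟩ => hx ▸ pstar_le_Lreg hq lam hφ⟩, hL⟩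

theorem stmt12 (r : ℕ) (hr : 2 ≤ r) (lam : ℝ) (hlam : 0 < lam)
    (q : Equiv.Perm (Fin r) → Fin (r - 1) → ℝ) (hq : ∀ π t, 0 ≤ q π t)
    (φs : ℕ → Equiv.Perm (Fin r) → Fin (r - 1) → ℝ)
    (ψs : ℕ → Edge r → Fin (r - 1) → ℝ)
    (hΦ : ∀ l, φs l ∈ PhiSet r)
    (hres : ∀ e : Edge r,
      Tendsto (fun l => φs l e.1.1 - ψs l e) atTop (nhds 0))
    (hobj : Tendsto (fun l => fObj r q (φs l) + ((gObj r lam (ψs l) : ℝ) : EReal))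
      atTop (nhds (pstar r q lam))) :
    IsLeast {x : EReal | ∃ φ ∈ PhiSet r, Lreg r q lam φ = x} (pstar r q lam) ∧
      Tendsto (fun l => Lreg r q lam (φs l)) atTop (nhds (pstar r q lam)) :=
  stmt12_general r lam q hq φs ψs hΦ hres hobj

end Paper
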